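/- Let n ≥ 1, d = 2^n, let Γ = Σ_k (ψ_k ψ_k†)^T ⊗ (ψ_k ψ_k†) be built from tensor products ψ_k = ψ_{1,k_1} ⊗ ⋯ ⊗ ψ_{n,k_n} of single-qubit SIC-POVM states, and let φ = (1/√d) Σ_{x=1}^d e_x ⊗ e_x ∈ ℂ^{d²}. Then for every vector v ∈ ℂ^{d²} orthogonal to φ, one has ⟨v, Γ v⟩ ≤ (d/3)·‖v‖². -/

import Mathlib

/-!
The four states of a qubit SIC-POVM form a 2-design, `∑ₖ Pₖ ⊗ Pₖ = (2/3)(1 + SWAP)`; this follows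
from the frame potential, since the overlaps `|⟨ψₖ, ψₗ⟩|² = 1/3` force the Frobenius norm of the
difference to vanish. Partially transposing, each qubit contributes the factor
`(2/3)(1 + ΦΦ†)` with `Φ = e₀ ⊗ e₀ + e₁ ⊗ e₁`, which has eigenvalue `2` on `Φ/√2` and `2/3` on its
orthogonal complement. Hence `Γ` is diagonal in the product of these Bell bases: its eigenvalue is
`2ⁿ` on `φ` and at most `2ⁿ⁻¹ · 2/3 = 2ⁿ/3` on every other basis vector.
-/

open Matrix Polynomial
open scoped Kronecker ComplexOrder Classical

noncomputable section

/-- Hermitian inner product on `m → ℂ`, conjugate-linear in the first argument. -/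
def cinner {m : Type*} [Fintype m] (v w : m → ℂ) : ℂ :=
  ∑ a, (starRingEnd ℂ) (v a) * w a

/-- A single-qubit SIC-POVM: four unit vectors in ℂ² with pairwise squared overlaps 1/3. -/
def IsSICPOVM (ψ : Fin 4 → Fin 2 → ℂ) : Prop :=
  (∀ k, cinner (ψ k) (ψ k) = 1) ∧
  ∀ k k', k ≠ k' → ‖cinner (ψ k) (ψ k')‖ ^ 2 = 1 / 3

/-- Tensor product state `ψ_k = ψ_{1,k_1} ⊗ ⋯ ⊗ ψ_{n,k_n}` on `ℂ^(2^n)`,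
    whose coordinates are indexed by `Fin n → Fin 2`. -/
def prodState {n : ℕ} (ψ : Fin n → Fin 4 → Fin 2 → ℂ) (k : Fin n → Fin 4) :
    (Fin n → Fin 2) → ℂ :=
  fun x => ∏ i, ψ i (k i) (x i)

/-- The rank-one projector `ψψ†` onto a vector. -/
def proj {m : Type*} (v : m → ℂ) : Matrix m m ℂ :=
  Matrix.vecMulVec v (star v)

/-- The matrix `Γ = Σ_k (ψ_k ψ_k†)ᵀ ⊗ (ψ_k ψ_k†)`. -/
def Gam {n : ℕ} (ψ : Fin n → Fin 4 → Fin 2 → ℂ) :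
    Matrix ((Fin n → Fin 2) × (Fin n → Fin 2)) ((Fin n → Fin 2) × (Fin n → Fin 2)) ℂ :=
  ∑ k : Fin n → Fin 4, (proj (prodState ψ k))ᵀ ⊗ₖ proj (prodState ψ k)

/-- The maximally entangled vector `φ = (1/√d) Σ_x e_x ⊗ e_x`, `d = 2^n`. -/
def maxEnt (n : ℕ) : (Fin n → Fin 2) × (Fin n → Fin 2) → ℂ :=
  fun p => if p.1 = p.2 then (((Real.sqrt (2 ^ n))⁻¹ : ℝ) : ℂ) else 0

open Finset

section Proj

variable {m ι : Type*}

lemma conjTranspose_proj (u : m → ℂ) : (proj u)ᴴ = proj u := by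
  rw [proj, conjTranspose_vecMulVec, star_star]

variable [Fintype m]

lemma cinner_eq_star_dotProduct (u w : m → ℂ) : cinner u w = star u ⬝ᵥ w := rfl

lemma cinner_self (v : m → ℂ) : cinner v v = ∑ a, Complex.normSq (v a) := by
  push_cast
  exact sum_congr rfl fun a _ => Complex.normSq_eq_conj_mul_self.symm

lemma trace_proj (u : m → ℂ) : trace (proj u) = cinner u u := by
  rw [proj, trace_vecMulVec, cinner_eq_star_dotProduct, dotProduct_comm]

lemma trace_proj_mul_proj (u w : m → ℂ) :
    trace (proj u * proj w) = Complex.normSq (cinner u w) := by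
  rw [proj, proj, vecMulVec_mul_vecMulVec, trace_vecMulVec, dotProduct_smul,
    Complex.normSq_eq_conj_mul_self, smul_eq_mul, mul_comm]
  simp [cinner, dotProduct, mul_comm]

lemma cinner_mulVec_proj (u v : m → ℂ) :
    cinner v (proj u *ᵥ v) = Complex.normSq (cinner u v) := by
  rw [Complex.normSq_eq_conj_mul_self]
  simp only [cinner, proj, mulVec, dotProduct, vecMulVec_apply, Pi.star_apply, map_sum,
    map_mul, Complex.conj_conj, sum_mul, mul_sum, RCLike.star_def]
  rw [sum_comm]
  exact sum_congr rfl fun a _ => sum_congr rfl fun b _ => by ring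

variable [Fintype ι]

lemma cinner_sum_smul_proj_mulVec (w : ι → ℂ) (u : ι → m → ℂ) (v : m → ℂ) :
    cinner v ((∑ j, w j • proj (u j)) *ᵥ v) = ∑ j, w j * Complex.normSq (cinner (u j) v) := by
  simp only [sum_mulVec, smul_mulVec, ← cinner_mulVec_proj]
  simp only [cinner, Pi.smul_apply, smul_eq_mul, Finset.sum_apply, mul_sum]
  rw [sum_comm]
  exact sum_congr rfl fun j _ => sum_congr rfl fun a _ => by ring

variable [DecidableEq m]

lemma sum_normSq_cinner_of_sum_proj_eq_one {u : ι → m → ℂ} (hu : ∑ j, proj (u j) = 1)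
    (v : m → ℂ) : ∑ j, Complex.normSq (cinner (u j) v) = ∑ a, Complex.normSq (v a) := by
  have h := cinner_sum_smul_proj_mulVec 1 u v
  simp only [Pi.one_apply, one_smul, one_mul, hu, one_mulVec, cinner_self] at h
  exact_mod_cast h.symm

theorem re_cinner_sum_smul_proj_mulVec_le {u : ι → m → ℂ} (hu : ∑ j, proj (u j) = 1)
    {w : ι → ℝ} {c : ℝ} {j₀ : ι} (hw : ∀ j ≠ j₀, w j ≤ c) {v : m → ℂ}
    (hv : cinner (u j₀) v = 0) :
    (cinner v ((∑ j, (w j : ℂ) • proj (u j)) *ᵥ v)).re ≤ c * ∑ a, Complex.normSq (v a) := by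
  rw [cinner_sum_smul_proj_mulVec, ← sum_normSq_cinner_of_sum_proj_eq_one hu, mul_sum]
  norm_cast
  refine sum_le_sum fun j _ => ?_
  obtain rfl | hj := eq_or_ne j j₀
  · simp [hv]
  · exact mul_le_mul_of_nonneg_right (hw j hj) (Complex.normSq_nonneg _)

end Proj

section Swap

variable {m : Type*} [DecidableEq m]

variable (m) in
def swapMatrix : Matrix (m × m) (m × m) ℂ := of fun p q => if p = q.swap then 1 else 0

lemma conjTranspose_swapMatrix : (swapMatrix m)ᴴ = swapMatrix m := by
  ext ⟨a, b⟩ ⟨c, e⟩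
  simp [swapMatrix, and_comm, eq_comm]

variable [Fintype m]

lemma swapMatrix_mul_self : swapMatrix m * swapMatrix m = 1 := by
  ext p q
  simp [swapMatrix, mul_apply, one_apply]

lemma trace_swapMatrix : trace (swapMatrix m) = Fintype.card m := by
  have h (a b : m) : (a = b ∧ b = a) ↔ a = b := ⟨And.left, fun h => ⟨h, h.symm⟩⟩
  rw [trace, Fintype.sum_prod_type]
  simp [swapMatrix, h]

lemma trace_kronecker_mul_swapMatrix (A B : Matrix m m ℂ) :
    trace ((A ⊗ₖ B) * swapMatrix m) = trace (A * B) := by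
  simp [trace, swapMatrix, mul_apply, Fintype.sum_prod_type, kroneckerMap_apply]

end Swap

lemma sum_ite_eq_sub_add_card_mul {ι : Type*} [Fintype ι] [DecidableEq ι] (k : ι) (a b : ℂ) :
    ∑ k', (if k = k' then a else b) = a - b + Fintype.card ι * b := by
  have h (k' : ι) : (if k = k' then a else b) = b + if k = k' then a - b else 0 := by
    split_ifs <;> ring
  simp only [h, sum_add_distrib, sum_const, card_univ, nsmul_eq_mul, sum_ite_eq, mem_univ,
    if_true]
  ring

section SICDesign

variable {m ι : Type*} [Fintype m] [DecidableEq m] [Fintype ι]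

/- Frame potential: with `T` the left side and `S` the right side, `tr T² = tr TS = tr S²`
all equal `2d³/(d+1)`, so the Frobenius norm of `T - S` vanishes. -/
theorem sum_proj_kronecker_proj_eq_of_sic {ψ : ι → m → ℂ}
    (hnorm : ∀ k, cinner (ψ k) (ψ k) = 1)
    (hover : ∀ k k', k ≠ k' → ‖cinner (ψ k) (ψ k')‖ ^ 2 = 1 / (Fintype.card m + 1))
    (hcard : Fintype.card ι = Fintype.card m ^ 2) :
    ∑ k, proj (ψ k) ⊗ₖ proj (ψ k) =
      ((Fintype.card m : ℂ) / (Fintype.card m + 1)) • (1 + swapMatrix m) := by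
  set d : ℂ := (Fintype.card m : ℂ) with hd_def
  set T := ∑ k, proj (ψ k) ⊗ₖ proj (ψ k) with hT_def
  set S := (d / (d + 1)) • (1 + swapMatrix m) with hS_def
  have hd : d + 1 ≠ 0 := Nat.cast_add_one_ne_zero _
  have hN : (Fintype.card ι : ℂ) = d ^ 2 := by rw [hcard, hd_def]; push_cast; rfl
  have hoverlap (k k' : ι) :
      (Complex.normSq (cinner (ψ k) (ψ k')) : ℂ) = if k = k' then 1 else 1 / (d + 1) := by
    split_ifs with h
    · simp [h, hnorm]
    · rw [Complex.normSq_eq_norm_sq, hover k k' h]; push_cast; rfl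
  have hT : Tᴴ = T := by
    simp [hT_def, conjTranspose_sum, conjTranspose_kronecker, conjTranspose_proj]
  have hS : Sᴴ = S := by
    simp [hS_def, conjTranspose_smul, conjTranspose_swapMatrix, hd_def]
  have hTT : trace (T * T) = 2 * d ^ 3 / (d + 1) := by
    have hsq (k k' : ι) : trace (proj (ψ k) * proj (ψ k')) * trace (proj (ψ k) * proj (ψ k')) =
        if k = k' then 1 else 1 / (d + 1) ^ 2 := by
      rw [trace_proj_mul_proj, hoverlap]
      split_ifs <;> field_simp
    simp only [hT_def, sum_mul_sum, ← mul_kronecker_mul, trace_sum, trace_kronecker, hsq,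
      sum_ite_eq_sub_add_card_mul, sum_const, card_univ, nsmul_eq_mul, hN]
    field_simp
    ring
  have hTS : trace (T * S) = 2 * d ^ 3 / (d + 1) := by
    simp only [hS_def, hT_def, mul_smul_comm, mul_add, mul_one, trace_smul, trace_add, sum_mul,
      trace_sum, trace_kronecker, trace_kronecker_mul_swapMatrix, trace_proj, trace_proj_mul_proj,
      hnorm, Complex.normSq_one, Complex.ofReal_one, sum_const, card_univ, nsmul_eq_mul, hN,
      smul_eq_mul]
    field_simp
    ring
  have hSS : trace (S * S) = 2 * d ^ 3 / (d + 1) := by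
    simp only [hS_def, smul_mul_smul_comm, mul_add, add_mul, mul_one, one_mul,
      swapMatrix_mul_self, trace_smul, trace_add, trace_one, trace_swapMatrix, smul_eq_mul,
      Fintype.card_prod]
    push_cast
    field_simp
    ring
  rw [← sub_eq_zero, ← trace_conjTranspose_mul_self_eq_zero_iff, conjTranspose_sub, hT, hS,
    sub_mul, mul_sub, mul_sub, trace_sub, trace_sub, trace_sub, trace_mul_comm S T, hTT, hTS,
    hSS]
  ring

/- The unnormalised maximally entangled vector `∑ a, e_a ⊗ e_a`. -/
variable (m) in
def diagVec : m × m → ℂ := fun p => if p.1 = p.2 then 1 else 0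

/- Partial transposition turns the swap operator into the projector onto `diagVec`. -/
theorem sum_transpose_proj_kronecker_proj_eq_of_sic {ψ : ι → m → ℂ}
    (hnorm : ∀ k, cinner (ψ k) (ψ k) = 1)
    (hover : ∀ k k', k ≠ k' → ‖cinner (ψ k) (ψ k')‖ ^ 2 = 1 / (Fintype.card m + 1))
    (hcard : Fintype.card ι = Fintype.card m ^ 2) :
    ∑ k, (proj (ψ k))ᵀ ⊗ₖ proj (ψ k) =
      ((Fintype.card m : ℂ) / (Fintype.card m + 1)) • (1 + proj (diagVec m)) := by
  ext ⟨a, b⟩ ⟨c, e⟩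
  have h := congrFun₂ (sum_proj_kronecker_proj_eq_of_sic hnorm hover hcard) (c, b) (a, e)
  simp only [Matrix.sum_apply, kroneckerMap_apply, transpose_apply] at h ⊢
  rw [h]
  simp [swapMatrix, diagVec, proj, vecMulVec_apply, one_apply, Prod.ext_iff, eq_comm, ite_and]

end SICDesign

lemma IsSICPOVM.sum_transpose_proj_kronecker_proj {ψ : Fin 4 → Fin 2 → ℂ} (h : IsSICPOVM ψ) :
    ∑ k, (proj (ψ k))ᵀ ⊗ₖ proj (ψ k) = (2 / 3 : ℂ) • (1 + proj (diagVec (Fin 2))) := by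
  have hover : ∀ k k', k ≠ k' → ‖cinner (ψ k) (ψ k')‖ ^ 2 = 1 / (Fintype.card (Fin 2) + 1) :=
    fun k k' hk => by rw [h.2 k k' hk]; norm_num
  rw [sum_transpose_proj_kronecker_proj_eq_of_sic h.1 hover rfl]
  norm_num

section ProductBasis

variable {α κ : Type*} [Fintype κ] {n : ℕ}

/- The product vector `⊗ᵢ e (j i)`, the `i`-th tensor factor being indexed by `(p.1 i, p.2 i)`. -/
def prodVec (e : κ → α × α → ℂ) (j : Fin n → κ) : (Fin n → α) × (Fin n → α) → ℂ :=
  fun p => ∏ i, e (j i) (p.1 i, p.2 i)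

lemma prod_sum_smul_proj_apply (w : κ → ℂ) (e : κ → α × α → ℂ)
    (p q : (Fin n → α) × (Fin n → α)) :
    ∏ i, (∑ k, w k • proj (e k)) (p.1 i, p.2 i) (q.1 i, q.2 i) =
      (∑ j : Fin n → κ, (∏ i, w (j i)) • proj (prodVec e j)) p q := by
  simp only [Matrix.sum_apply, Matrix.smul_apply, proj, vecMulVec_apply, Pi.star_apply, prodVec,
    smul_eq_mul, Fintype.prod_sum, star_prod, ← prod_mul_distrib]

lemma one_apply_eq_prod [DecidableEq α] (p q : (Fin n → α) × (Fin n → α)) :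
    (1 : Matrix _ _ ℂ) p q = ∏ i, (1 : Matrix (α × α) (α × α) ℂ) (p.1 i, p.2 i) (q.1 i, q.2 i) := by
  simp only [one_apply, prod_ite_zero, prod_const_one, Prod.ext_iff, funext_iff, mem_univ,
    forall_const, forall_and]

end ProductBasis

lemma Gam_apply_eq_prod {n : ℕ} (ψ : Fin n → Fin 4 → Fin 2 → ℂ)
    (p q : (Fin n → Fin 2) × (Fin n → Fin 2)) :
    Gam ψ p q = ∏ i, (∑ k, (proj (ψ i k))ᵀ ⊗ₖ proj (ψ i k)) (p.1 i, p.2 i) (q.1 i, q.2 i) := by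
  simp only [Gam, Matrix.sum_apply, kroneckerMap_apply, transpose_apply, proj, vecMulVec_apply,
    Pi.star_apply, prodState, Fintype.prod_sum, star_prod, ← prod_mul_distrib]

section Bell

/- An orthonormal eigenbasis of `(2/3) • (1 + proj (diagVec (Fin 2)))`; the `(a, b)` entry of
the `k`-th matrix is the coefficient of `e_a ⊗ e_b`. -/
def bellBasis : Fin 4 → Fin 2 × Fin 2 → ℂ :=
  let s : ℂ := (Real.sqrt 2 : ℂ)⁻¹
  fun k p => ![!![s, 0; 0, s], !![s, 0; 0, -s], !![0, 1; 0, 0], !![0, 0; 1, 0]] k p.1 p.2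

def bellEigenvalue (k : Fin 4) : ℝ := if k = 0 then 2 else 2 / 3

lemma inv_sqrt_two_mul_self : (Real.sqrt 2 : ℂ)⁻¹ * (Real.sqrt 2 : ℂ)⁻¹ = 2⁻¹ := by
  rw [← mul_inv, ← Complex.ofReal_mul, Real.mul_self_sqrt zero_le_two, Complex.ofReal_ofNat]

lemma sum_proj_bellBasis : ∑ k, proj (bellBasis k) = 1 := by
  ext ⟨a, b⟩ ⟨c, e⟩
  fin_cases a <;> fin_cases b <;> fin_cases c <;> fin_cases e <;>
    simp [bellBasis, proj, vecMulVec_apply, Fin.sum_univ_four, one_apply, inv_sqrt_two_mul_self,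
      Complex.conj_ofReal] <;> norm_num

lemma proj_bellBasis_zero : proj (bellBasis 0) = (1 / 2 : ℂ) • proj (diagVec (Fin 2)) := by
  ext ⟨a, b⟩ ⟨c, e⟩
  fin_cases a <;> fin_cases b <;> fin_cases c <;> fin_cases e <;>
    simp [bellBasis, proj, vecMulVec_apply, diagVec, inv_sqrt_two_mul_self, Complex.conj_ofReal]

lemma sum_bellEigenvalue_smul_proj_bellBasis :
    ∑ k, (bellEigenvalue k : ℂ) • proj (bellBasis k) =
      (2 / 3 : ℂ) • (1 + proj (diagVec (Fin 2))) := by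
  have hw (k : Fin 4) : (bellEigenvalue k : ℂ) = 2 / 3 + if k = 0 then 4 / 3 else 0 := by
    unfold bellEigenvalue; split_ifs <;> norm_num
  simp only [hw, add_smul, sum_add_distrib, ← smul_sum, sum_proj_bellBasis, ite_smul, zero_smul,
    sum_ite_eq', mem_univ, if_true, proj_bellBasis_zero, smul_smul, smul_add]
  norm_num

end Bell

section Qubits

variable {n : ℕ}

lemma Gam_eq_sum_smul_proj {ψ : Fin n → Fin 4 → Fin 2 → ℂ} (hψ : ∀ i, IsSICPOVM (ψ i)) :
    Gam ψ = ∑ j : Fin n → Fin 4,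
      ((∏ i, bellEigenvalue (j i) : ℝ) : ℂ) • proj (prodVec bellBasis j) := by
  ext p q
  simp only [Gam_apply_eq_prod, (hψ _).sum_transpose_proj_kronecker_proj,
    ← sum_bellEigenvalue_smul_proj_bellBasis, prod_sum_smul_proj_apply, Complex.ofReal_prod]

lemma sum_proj_prodVec_bellBasis : ∑ j : Fin n → Fin 4, proj (prodVec bellBasis j) = 1 := by
  ext p q
  rw [one_apply_eq_prod, ← sum_proj_bellBasis]
  simpa using (prod_sum_smul_proj_apply 1 bellBasis p q).symm

lemma maxEnt_eq_prodVec_bellBasis : maxEnt n = prodVec bellBasis 0 := by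
  have hbell (a b : Fin 2) : bellBasis 0 (a, b) = if a = b then (Real.sqrt 2 : ℂ)⁻¹ else 0 := by
    fin_cases a <;> fin_cases b <;> simp [bellBasis]
  have hsqrt : Real.sqrt (2 ^ n) = Real.sqrt 2 ^ n := by
    rw [Real.sqrt_eq_iff_eq_sq (by positivity) (by positivity), ← pow_mul, mul_comm, pow_mul,
      Real.sq_sqrt zero_le_two]
  ext p
  have hdiag : (∀ i, p.1 i = p.2 i) ↔ p.1 = p.2 := funext_iff.symm
  simp only [maxEnt, prodVec, Pi.zero_apply, hbell, prod_ite_zero, prod_const, card_univ,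
    Fintype.card_fin, mem_univ, forall_const, hdiag, hsqrt]
  push_cast
  rw [inv_pow]

lemma prod_bellEigenvalue_le {j : Fin n → Fin 4} (hj : j ≠ 0) :
    ∏ i, bellEigenvalue (j i) ≤ 2 ^ n / 3 := by
  obtain ⟨i₀, hi₀⟩ := Function.ne_iff.mp hj
  have htwo : (2 : ℝ) ^ n = 2 * ∏ i ∈ univ.erase i₀, (2 : ℝ) := by
    rw [mul_prod_erase _ (fun _ => (2 : ℝ)) (mem_univ i₀), prod_const, card_univ,
      Fintype.card_fin]
  have hbounds (k : Fin 4) : 0 ≤ bellEigenvalue k ∧ bellEigenvalue k ≤ 2 := by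
    unfold bellEigenvalue; split_ifs <;> norm_num
  calc ∏ i, bellEigenvalue (j i)
      = bellEigenvalue (j i₀) * ∏ i ∈ univ.erase i₀, bellEigenvalue (j i) :=
        (mul_prod_erase _ _ (mem_univ i₀)).symm
    _ ≤ 2 / 3 * ∏ i ∈ univ.erase i₀, (2 : ℝ) := by
        rw [bellEigenvalue, if_neg (show j i₀ ≠ 0 from hi₀)]
        gcongr with i
        · exact fun i _ => (hbounds _).1
        · exact (hbounds _).2
    _ = 2 ^ n / 3 := by rw [htwo]; ring

end Qubits

theorem Gam_quadForm_le_on_orthogonal_general (n : ℕ)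
    (ψ : Fin n → Fin 4 → Fin 2 → ℂ) (hψ : ∀ i, IsSICPOVM (ψ i)) :
    ∀ v : (Fin n → Fin 2) × (Fin n → Fin 2) → ℂ,
      cinner (maxEnt n) v = 0 →
      (cinner v ((Gam ψ).mulVec v)).re ≤ (2 ^ n / 3 : ℝ) * ∑ a, Complex.normSq (v a) := by
  intro v hv
  rw [maxEnt_eq_prodVec_bellBasis] at hv
  rw [Gam_eq_sum_smul_proj hψ]
  exact re_cinner_sum_smul_proj_mulVec_le sum_proj_prodVec_bellBasis
    (fun j hj => prod_bellEigenvalue_le hj) hv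

/-- On the orthogonal complement of `φ`, the quadratic form of `Γ` is bounded by
    `(d/3)·‖v‖²`. -/
theorem Gam_quadForm_le_on_orthogonal (n : ℕ) (hn : 1 ≤ n)
    (ψ : Fin n → Fin 4 → Fin 2 → ℂ) (hψ : ∀ i, IsSICPOVM (ψ i)) :
    ∀ v : (Fin n → Fin 2) × (Fin n → Fin 2) → ℂ,
      cinner (maxEnt n) v = 0 →
      (cinner v ((Gam ψ).mulVec v)).re ≤ (2 ^ n / 3 : ℝ) * ∑ a, Complex.normSq (v a) :=
  Gam_quadForm_le_on_orthogonal_general n ψ hψ
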